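/- Let A(x) = [[x₀+x₁, x₀+x₂, x₃, x₂],[x₀+x₂, x₀−x₁, x₃, x₂],[x₃, x₃, x₄, x₅],[x₂, x₂, x₅, 0]]. Then the Jacobian ideal of f = det A(x) (the ideal generated by f and its six partial derivatives) is contained in the ideal ⟨x₂², x₅⟩; in particular the quartic hypersurface f = 0 in ℙ⁵ contains the 3-space {x₂ = x₅ = 0} doubly in its singular locus. -/

import Mathlib

/-! The determinant has the shape `x₂² a + x₅² b` with `a ∈ ⟨x₂, x₅⟩`. Any derivation `D` maps such
an element into `⟨x₂², x₅⟩`: by the Leibniz rule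
`D f = x₂² D a + 2 (x₂ a) D x₂ + x₅ (x₅ D b + 2 b D x₅)`, and `x₂ a ∈ ⟨x₂², x₂ x₅⟩`. -/

open MvPolynomial Matrix

noncomputable def pencilD : Matrix (Fin 4) (Fin 4) (MvPolynomial (Fin 6) ℚ) :=
  !![X 0 + X 1, X 0 + X 2, X 3, X 2;
     X 0 + X 2, X 0 - X 1, X 3, X 2;
     X 3, X 3, X 4, X 5;
     X 2, X 2, X 5, 0]

section SquarePair

variable {R A : Type*} [CommSemiring R] [CommSemiring A] [Algebra R A]

lemma sq_mul_add_sq_mul_mem_span (u v a b : A) :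
    u ^ 2 * a + v ^ 2 * b ∈ Ideal.span {u ^ 2, v} :=
  Ideal.mem_span_pair.mpr ⟨a, v * b, by ring⟩

lemma Derivation.apply_sq_mul_add_sq_mul_mem_span (D : Derivation R A A) {u v a : A} (b : A)
    (ha : a ∈ Ideal.span {u, v}) : D (u ^ 2 * a + v ^ 2 * b) ∈ Ideal.span {u ^ 2, v} := by
  set J := Ideal.span {u ^ 2, v}
  have hu : u ^ 2 ∈ J := Ideal.subset_span (by simp)
  have hv : v ∈ J := Ideal.subset_span (by simp)
  have hua : u * a ∈ J := by
    obtain ⟨r, s, rfl⟩ := Ideal.mem_span_pair.mp ha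
    exact Ideal.mem_span_pair.mpr ⟨r, s * u, by ring⟩
  have hD : D (u ^ 2 * a + v ^ 2 * b) =
      u ^ 2 * D a + 2 * (u * a) * D u + v * (v * D b + 2 * b * D v) := by
    simp only [map_add, Derivation.leibniz, Derivation.leibniz_pow, smul_eq_mul, nsmul_eq_mul,
      Nat.cast_ofNat, Nat.add_one_sub_one, pow_one]
    ring
  rw [hD]
  exact J.add_mem (J.add_mem (J.mul_mem_right _ hu) (J.mul_mem_right _ (J.mul_mem_left _ hua)))
    (J.mul_mem_right _ hv)

end SquarePair

lemma det_pencilD : pencilD.det =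
    X 2 ^ 2 * (X 5 ^ 2 - 4 * X 3 * X 5 + 2 * X 2 * X 4) + X 5 ^ 2 * (X 1 ^ 2 + 2 * X 0 * X 2) := by
  simp [pencilD, Matrix.det_succ_row_zero, Fin.sum_univ_succ, Fin.succAbove, Fin.castSucc,
    Fin.castAdd, Fin.castLE]
  ring

/-- The Jacobian ideal of `f = det A(x)` (generated by `f` and its six partial
derivatives) is contained in the ideal `⟨x₂², x₅⟩`: the quartic `f = 0` contains the
3-space `{x₂ = x₅ = 0}` doubly in its singular locus. -/
theorem jacobian_ideal_contained :
    Ideal.span ({pencilD.det} ∪ Set.range fun i : Fin 6 => pderiv i pencilD.det) ≤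
      Ideal.span {(X 2 : MvPolynomial (Fin 6) ℚ) ^ 2, X 5} := by
  have ha : (X 5 ^ 2 - 4 * X 3 * X 5 + 2 * X 2 * X 4 : MvPolynomial (Fin 6) ℚ) ∈
      Ideal.span {X 2, X 5} :=
    Ideal.mem_span_pair.mpr ⟨2 * X 4, X 5 - 4 * X 3, by ring⟩
  rw [Ideal.span_le, det_pencilD]
  rintro p (rfl | ⟨i, rfl⟩)
  · exact sq_mul_add_sq_mul_mem_span _ _ _ _
  · exact (pderiv i).apply_sq_mul_add_sq_mul_mem_span _ ha
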